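/- With probability at least 1−δ, the weighted sampling estimate satisfies |w_S(Q) − w(Q)| ≤ (2W/s)·sqrt(|Q|·log(2/δ)), assuming all sampling probabilities p_i for i ∈ Q satisfy p_i < 1. -/

import Mathlib

/-!
On `Q` the sampling probabilities are `pᵢ = s|gᵢ|/W`, so every term `(gᵢ/pᵢ)·χᵢ` of `w_S(Q)` is
bounded by `W/s` and has mean `gᵢ`. By Hoeffding's lemma each centred term is sub-Gaussian with
variance proxy `(W/s)²`; by independence `w_S(Q) − w(Q)` is sub-Gaussian with variance proxy
`|Q|(W/s)²`, and the Chernoff bound applied to it and to its negative shows that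
`|w_S(Q) − w(Q)| ≤ (W/s)·√(2|Q| log(2/δ))` with probability at least `1 − δ`.
-/

open MeasureTheory ProbabilityTheory Real
open scoped NNReal

namespace ProbabilityTheory

variable {Ω : Type*} [MeasurableSpace Ω] {μ : Measure Ω} [IsProbabilityMeasure μ]

namespace HasSubgaussianMGF

variable {X : Ω → ℝ} {c : ℝ≥0}

lemma measureReal_abs_ge_le (h : HasSubgaussianMGF X c μ) {ε : ℝ} (hε : 0 ≤ ε) :
    μ.real {ω | ε ≤ |X ω|} ≤ 2 * exp (-ε ^ 2 / (2 * c)) := by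
  have h_split : {ω | ε ≤ |X ω|} ⊆ {ω | ε ≤ X ω} ∪ {ω | ε ≤ (-X) ω} := fun ω hω ↦ by
    rcases le_abs'.mp (show ε ≤ |X ω| from hω) with h | h
    · exact Or.inr (show ε ≤ -X ω by linarith)
    · exact Or.inl h
  calc μ.real {ω | ε ≤ |X ω|}
      ≤ μ.real {ω | ε ≤ X ω} + μ.real {ω | ε ≤ (-X) ω} :=
        (measureReal_mono h_split).trans (measureReal_union_le _ _)
    _ ≤ 2 * exp (-ε ^ 2 / (2 * c)) := by
        linarith [h.measure_ge_le hε, h.neg.measure_ge_le hε]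

lemma measureReal_sqrt_lt_abs_le (h : HasSubgaussianMGF X c μ) {δ : ℝ} (hδ : 0 < δ) :
    μ.real {ω | sqrt (2 * c * log (2 / δ)) < |X ω|} ≤ δ := by
  rcases le_or_gt 1 δ with hδ1 | hδ1
  · exact measureReal_le_one.trans hδ1
  rcases eq_or_ne c 0 with rfl | hc
  -- the Chernoff bound is vacuous at `c = 0` (`x / 0 = 0`), but then `X = 0` a.e.
  · have h_null : μ {ω | sqrt (2 * (0 : ℝ≥0) * log (2 / δ)) < |X ω|} = 0 := by
      refine measure_mono_null (fun ω hω ↦ ?_) (ae_iff.mp h.ae_eq_zero_of_hasSubgaussianMGF_zero)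
      simp_all
    rw [Measure.real, h_null, ENNReal.toReal_zero]
    exact hδ.le
  have hL : 0 ≤ log (2 / δ) := log_nonneg (by rw [le_div_iff₀ hδ]; linarith)
  have hc : (0 : ℝ) < c := by positivity
  calc μ.real {ω | sqrt (2 * c * log (2 / δ)) < |X ω|}
      ≤ μ.real {ω | sqrt (2 * c * log (2 / δ)) ≤ |X ω|} :=
        measureReal_mono (Set.ofPred_subset_ofPred.mpr fun _ ↦ le_of_lt)
    _ ≤ 2 * exp (-sqrt (2 * c * log (2 / δ)) ^ 2 / (2 * c)) :=
        h.measureReal_abs_ge_le (sqrt_nonneg _)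
    _ = δ := by
        rw [sq_sqrt (by positivity), neg_div, mul_div_cancel_left₀ _ (by positivity), exp_neg,
          exp_log (by positivity)]
        field_simp

lemma ofReal_one_sub_le_measure_abs_le (h : HasSubgaussianMGF X c μ) {δ : ℝ} (hδ : 0 < δ) :
    ENNReal.ofReal (1 - δ) ≤ μ {ω | |X ω| ≤ sqrt (2 * c * log (2 / δ))} := by
  set A := {ω | |X ω| ≤ sqrt (2 * c * log (2 / δ))}
  have h_compl : μ.real Aᶜ ≤ δ := by
    convert h.measureReal_sqrt_lt_abs_le hδ using 2
    ext ω
    simp [A]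
  refine ENNReal.ofReal_le_of_le_toReal ?_
  have := measureReal_union_le (μ := μ) A Aᶜ
  rw [Set.union_compl_self, probReal_univ] at this
  simp only [Measure.real] at this h_compl ⊢
  linarith

end HasSubgaussianMGF

lemma hasSubgaussianMGF_sub_integral_of_abs_le {X : Ω → ℝ} {B : ℝ}
    (hX : AEMeasurable X μ) (hB : ∀ᵐ ω ∂μ, |X ω| ≤ B) :
    HasSubgaussianMGF (fun ω ↦ X ω - μ[X]) (‖B‖₊ ^ 2) μ := by
  convert hasSubgaussianMGF_of_mem_Icc hX (hB.mono fun ω ↦ abs_le.mp) using 2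
  ext
  simp [← two_mul]

theorem ofReal_one_sub_le_measure_abs_sum_sub_integral_le {ι : Type*}
    {X : ι → Ω → ℝ} (h_indep : iIndepFun X μ) (h_meas : ∀ i, Measurable (X i)) {s : Finset ι}
    {B : ℝ} (h_bound : ∀ i ∈ s, ∀ᵐ ω ∂μ, |X i ω| ≤ B) {δ : ℝ} (hδ : 0 < δ) :
    ENNReal.ofReal (1 - δ) ≤
      μ {ω | |∑ i ∈ s, (X i ω - μ[X i])| ≤ sqrt (2 * (s.card * B ^ 2) * log (2 / δ))} := by
  have h_centered : iIndepFun (fun i ω ↦ X i ω - μ[X i]) μ :=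
    h_indep.comp (fun i (x : ℝ) ↦ x - ∫ ω, X i ω ∂μ) fun _ ↦ measurable_sub_const _
  have h_subG : ∀ i ∈ s, HasSubgaussianMGF (fun ω ↦ X i ω - μ[X i]) (‖B‖₊ ^ 2) μ :=
    fun i hi ↦ hasSubgaussianMGF_sub_integral_of_abs_le (h_meas i).aemeasurable (h_bound i hi)
  convert (HasSubgaussianMGF.sum_of_iIndepFun h_centered h_subG).ofReal_one_sub_le_measure_abs_le
    hδ
  simp

end ProbabilityTheory

lemma abs_div_mul_abs_div_le (a : ℝ) {s W : ℝ} (hs : 0 < s) (hW : 0 < W) :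
    |a / (s * |a| / W)| ≤ W / s := by
  rcases eq_or_ne a 0 with rfl | ha
  · simpa using (div_pos hW hs).le
  · have h_prob : 0 < s * |a| / W := by positivity
    rw [abs_div, abs_of_pos h_prob]
    exact le_of_eq (by field_simp)

theorem weighted_sampling_concentration_general {Ω : Type*} [MeasurableSpace Ω]
    (μ : Measure Ω) [IsProbabilityMeasure μ] {n : ℕ}
    (g : Fin n → ℝ) (s W δ : ℝ) (hs : 0 < s)
    (hWpos : 0 < W) (hδ0 : 0 < δ) (hδ1 : δ < 1)
    (p : Fin n → ℝ) (hp : ∀ i, p i = min 1 (s * |g i| / W))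
    (χ : Fin n → Ω → ℝ) (hmeas : ∀ i, Measurable (χ i))
    (hind : iIndepFun χ μ)
    (hval : ∀ i, ∀ ω, χ i ω = 0 ∨ χ i ω = 1)
    (hmean : ∀ i, ∫ ω, χ i ω ∂μ = p i)
    (Q : Finset (Fin n)) (hQ : ∀ i ∈ Q, p i < 1) :
    ENNReal.ofReal (1 - δ) ≤
      μ {ω | |(∑ i ∈ Q, g i / p i * χ i ω) - ∑ i ∈ Q, g i| ≤
        (2 * W / s) * Real.sqrt (Q.card * Real.log (2 / δ))} := by
  have hp_eq : ∀ i ∈ Q, p i = s * |g i| / W := fun i hi ↦ by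
    have := hQ i hi
    rw [hp] at this ⊢
    exact min_eq_right (min_lt_iff.mp this |>.resolve_left (lt_irrefl 1)).le
  set Y : Fin n → Ω → ℝ := fun i ω ↦ g i / p i * χ i ω
  have hY_indep : iIndepFun Y μ :=
    hind.comp (fun i (x : ℝ) ↦ g i / p i * x) fun _ ↦ measurable_const_mul _
  have hY_bound : ∀ i ∈ Q, ∀ᵐ ω ∂μ, |Y i ω| ≤ W / s := fun i hi ↦ ae_of_all _ fun ω ↦ by
    rcases hval i ω with h | h
    · simpa [Y, h] using (div_pos hWpos hs).le
    · simpa [Y, h, hp_eq i hi] using abs_div_mul_abs_div_le (g i) hs hWpos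
  have hY_mean : ∀ i ∈ Q, μ[Y i] = g i := fun i hi ↦ by
    rw [integral_const_mul, hmean, hp_eq i hi]
    exact div_mul_cancel_of_imp fun h ↦ by simpa [hs.ne', hWpos.ne'] using h
  have h_radius : sqrt (2 * (Q.card * (W / s) ^ 2) * log (2 / δ)) ≤
      2 * W / s * sqrt (Q.card * log (2 / δ)) := by
    have hL : 0 ≤ log (2 / δ) := log_nonneg (by rw [le_div_iff₀ hδ0]; linarith)
    rw [sqrt_le_iff]
    refine ⟨by positivity, ?_⟩
    rw [mul_pow, sq_sqrt (by positivity)]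
    have h_nonneg : 0 ≤ 2 * (Q.card * (W / s) ^ 2) * log (2 / δ) := by positivity
    linarith [show (2 * W / s) ^ 2 * (Q.card * log (2 / δ)) =
      2 * (2 * (Q.card * (W / s) ^ 2) * log (2 / δ)) by ring]
  refine (ofReal_one_sub_le_measure_abs_sum_sub_integral_le hY_indep
    (fun i ↦ (hmeas i).const_mul _) hY_bound hδ0).trans (measure_mono fun ω hω ↦ ?_)
  rw [Set.mem_ofPred_eq, Finset.sum_sub_distrib, Finset.sum_congr rfl hY_mean] at hω
  exact hω.trans h_radius

/-- With probability at least `1 − δ`, the weighted sampling estimate satisfies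
`|w_S(Q) − w(Q)| ≤ (2W/s)·√(|Q|·log(2/δ))`, assuming all sampling
probabilities `pᵢ` for `i ∈ Q` satisfy `pᵢ < 1`.  Here `pᵢ = min(1, s|gᵢ|/W)`,
`W = Σᵢ |gᵢ|`, `χ i` is the `{0,1}`-valued independent indicator of `i ∈ S`
with mean `pᵢ`, `w_S(Q) = Σ_{i ∈ Q} (gᵢ/pᵢ)·χ i` and `w(Q) = Σ_{i ∈ Q} gᵢ`. -/
theorem weighted_sampling_concentration {Ω : Type*} [MeasurableSpace Ω]
    (μ : Measure Ω) [IsProbabilityMeasure μ] {n : ℕ}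
    (g : Fin n → ℝ) (s W δ : ℝ) (hs : 0 < s) (hW : W = ∑ i, |g i|)
    (hWpos : 0 < W) (hδ0 : 0 < δ) (hδ1 : δ < 1)
    (p : Fin n → ℝ) (hp : ∀ i, p i = min 1 (s * |g i| / W))
    (χ : Fin n → Ω → ℝ) (hmeas : ∀ i, Measurable (χ i))
    (hind : iIndepFun χ μ)
    (hval : ∀ i, ∀ ω, χ i ω = 0 ∨ χ i ω = 1)
    (hmean : ∀ i, ∫ ω, χ i ω ∂μ = p i)
    (Q : Finset (Fin n)) (hQ : ∀ i ∈ Q, p i < 1) :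
    ENNReal.ofReal (1 - δ) ≤
      μ {ω | |(∑ i ∈ Q, g i / p i * χ i ω) - ∑ i ∈ Q, g i| ≤
        (2 * W / s) * Real.sqrt (Q.card * Real.log (2 / δ))} :=
  weighted_sampling_concentration_general μ g s W δ hs hWpos hδ0 hδ1 p hp χ hmeas hind hval hmean Q
    hQ
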